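/- Let N ≥ 1 and let q be an integer; set K = gcd(N, q) and Ñ = N/K, and assume Ñ is even but not a power of 2. Let p be an odd prime dividing Ñ/2, and write M = Ñ/2. Let n ∈ ℤ^N, define y_l = Σ_{k=0}^{K-1} n_{l + kÑ} for 0 ≤ l < Ñ, and define z_l = y_l - y_{l + M} for 0 ≤ l < M. If z_j = (-1)^{⌊ j·p / M ⌋} · z_{j mod (M/p)} for all 0 ≤ j < M, then Σ_{j=0}^{N-1} n_j · exp(-2πi q j / N) = 0. -/

import Mathlib

/-- Extension of a vector indexed by `Fin N` to all of `ℕ`, by zero. -/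
def pad {N : ℕ} {α : Type*} [Zero α] (n : Fin N → α) : ℕ → α :=
  fun k => if h : k < N then n ⟨k, h⟩ else 0

/-!
With `Ñ = N / K` and `q̃ = q / K` coprime, `ζ = exp (-2πi q / N)` is a primitive `Ñ`-th root of
unity. Folding the transform modulo `Ñ` turns it into `∑_{l < Ñ} y_l ζ^l`, and `ζ^M = -1` turns
that into `∑_{l < M} z_l ζ^l`. Writing `l = a (M/p) + r`, the hypothesis on `z` factors this sum as
`(∑_{a < p} ω^a) · ∑_{r < M/p} z_r ζ^r` with `ω = -ζ^(M/p)`. Since `p` is odd, `ω^p = -ζ^M = 1`,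
while `ω ≠ 1` because `ζ^(2M/p) ≠ 1` for `p > 1`; so the geometric sum vanishes.
-/

open Finset Complex Real

theorem sum_range_mul_eq_sum_sum {M : Type*} [AddCommMonoid M] (f : ℕ → M) (a b : ℕ) :
    ∑ j ∈ range (a * b), f j = ∑ k ∈ range a, ∑ l ∈ range b, f (k * b + l) := by
  induction a with
  | zero => simp
  | succ a ih => rw [Nat.succ_mul, sum_range_add, ih, sum_range_succ]

theorem Complex.isPrimitiveRoot_exp_int_div (N : ℕ) (hN : N ≠ 0) (q : ℤ) :
    IsPrimitiveRoot (exp (2 * π * I * q / N)) (N / Int.gcd N q) := by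
  set K := Int.gcd N q
  have hK : 0 < K := Int.gcd_pos_of_ne_zero_left q (by exact_mod_cast hN)
  have hKN : K ∣ N := by exact_mod_cast Int.gcd_dvd_left (a := N) (b := q)
  have hKq : (K : ℤ) ∣ q := Int.gcd_dvd_right ..
  have hN' : N / K ≠ 0 := (Nat.div_pos (Nat.le_of_dvd (by omega) hKN) hK).ne'
  have hcop : (q / K).gcd (N / K : ℕ) = 1 := by
    rw [Int.natCast_div, Int.gcd_comm]; exact Int.gcd_div_gcd_div_gcd hK
  have hexp : 2 * π * I * q / N = (q / K : ℤ) * (2 * π * I / (N / K : ℕ)) := by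
    obtain ⟨Ñ, hÑ⟩ := hKN
    obtain ⟨q', hq'⟩ := hKq
    have hK0 : (K : ℂ) ≠ 0 := by exact_mod_cast hK.ne'
    rw [hÑ, hq', Nat.mul_div_cancel_left _ hK,
      Int.mul_ediv_cancel_left _ (by exact_mod_cast hK.ne')]
    push_cast
    field_simp
  rw [hexp, exp_int_mul]
  exact (isPrimitiveRoot_exp _ hN').zpow_of_gcd_eq_one _ hcop

section RootOfUnity

variable {R : Type*} [CommRing R] {ζ : R}

theorem sum_range_mul_pow_of_pow_eq_one {b : ℕ} (hζ : ζ ^ b = 1) (f : ℕ → R) (a : ℕ) :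
    ∑ j ∈ range (a * b), f j * ζ ^ j
      = ∑ l ∈ range b, (∑ k ∈ range a, f (l + k * b)) * ζ ^ l := by
  rw [sum_range_mul_eq_sum_sum, sum_comm]
  refine sum_congr rfl fun l _ => ?_
  rw [sum_mul]
  refine sum_congr rfl fun k _ => ?_
  rw [pow_add, pow_mul', hζ, one_pow, one_mul, add_comm]

theorem sum_range_two_mul_pow_of_pow_eq_neg_one {M : ℕ} (hζ : ζ ^ M = -1) (f : ℕ → R) :
    ∑ l ∈ range (2 * M), f l * ζ ^ l = ∑ l ∈ range M, (f l - f (l + M)) * ζ ^ l := by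
  rw [two_mul, sum_range_add, ← sum_add_distrib]
  refine sum_congr rfl fun l _ => ?_
  rw [pow_add, hζ, add_comm M]
  ring

theorem sum_range_mul_pow_of_antiperiodic {p m : ℕ} (f : ℕ → R)
    (hf : ∀ a < p, ∀ r < m, f (a * m + r) = (-1) ^ a * f r) :
    ∑ l ∈ range (p * m), f l * ζ ^ l
      = (∑ a ∈ range p, (-ζ ^ m) ^ a) * ∑ r ∈ range m, f r * ζ ^ r := by
  rw [sum_range_mul_eq_sum_sum, sum_mul]
  refine sum_congr rfl fun a ha => ?_
  rw [mul_sum]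
  refine sum_congr rfl fun r hr => ?_
  rw [hf a (mem_range.1 ha) r (mem_range.1 hr), pow_add, mul_comm a m, pow_mul,
    neg_pow (ζ ^ m)]
  ring

end RootOfUnity

theorem geom_sum_eq_zero_of_pow_eq_one {R : Type*} [Ring R] [NoZeroDivisors R] {ω : R} {p : ℕ}
    (hω : ω ≠ 1) (hωp : ω ^ p = 1) : ∑ a ∈ range p, ω ^ a = 0 :=
  (mul_eq_zero.1 (by rw [geom_sum_mul, hωp, sub_self])).resolve_right (sub_ne_zero.2 hω)

namespace IsPrimitiveRoot

variable {R : Type*} [CommRing R] [IsDomain R] {ζ : R}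

theorem pow_eq_neg_one {M : ℕ} (hζ : IsPrimitiveRoot ζ (2 * M)) (hM : M ≠ 0) : ζ ^ M = -1 := by
  have h2 := hζ.pow_of_dvd hM (Dvd.intro_left 2 rfl)
  rw [Nat.mul_div_cancel _ (Nat.pos_of_ne_zero hM)] at h2
  exact h2.eq_neg_one_of_two_right

theorem geom_sum_neg_pow_eq_zero {p m : ℕ} (hζ : IsPrimitiveRoot ζ (2 * (p * m)))
    (hp : 1 < p) (hpodd : Odd p) (hm : 0 < m) : ∑ a ∈ range p, (-ζ ^ m) ^ a = 0 := by
  have hζM := hζ.pow_eq_neg_one (by positivity)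
  refine geom_sum_eq_zero_of_pow_eq_one (fun h1 => ?_) ?_
  · refine hζ.pow_ne_one_of_pos_of_lt (l := 2 * m) (by omega) (by nlinarith) ?_
    rw [pow_mul', ← neg_sq, h1, one_pow]
  · rw [neg_pow, hpodd.neg_one_pow, ← pow_mul, mul_comm m p, hζM, neg_one_mul, neg_neg]

end IsPrimitiveRoot

theorem mul_add_mul_div_mul {a m r p : ℕ} (hr : r < m) (hp : 0 < p) :
    (a * m + r) * p / (p * m) = a := by
  rw [show (a * m + r) * p = r * p + p * m * a by ring,
    Nat.add_mul_div_left _ _ (Nat.mul_pos hp (by omega)), Nat.div_eq_of_lt (by nlinarith),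
    zero_add]

theorem cyclic_case_three_solution_general (N : ℕ) (q : ℤ)
    (K Ntil M : ℕ) (hK : K = Int.gcd (N : ℤ) q) (hNtil : Ntil = N / K)
    (hEven : Even Ntil)
    (hM : M = Ntil / 2)
    (p : ℕ) (hp : p.Prime) (hpodd : Odd p) (hpd : p ∣ Ntil / 2)
    (n : Fin N → ℤ)
    (y : ℕ → ℤ) (hy : ∀ l, y l = ∑ k ∈ Finset.range K, pad n (l + k * Ntil))
    (z : ℕ → ℤ) (hz : ∀ l, z l = y l - y (l + M))
    (h : ∀ j < M, z j = (-1 : ℤ) ^ (j * p / M) * z (j % (M / p))) :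
    ∑ j : Fin N, (n j : ℂ) *
      Complex.exp (-(2 * (Real.pi : ℂ) * Complex.I * (q : ℂ) * ((j : ℕ) : ℂ)) / (N : ℂ)) = 0 := by
  obtain rfl | hN := N.eq_zero_or_pos
  · simp
  set ζ := exp (-(2 * π * I * q) / N)
  have hζ : IsPrimitiveRoot ζ Ntil := by
    simpa [hK, hNtil, Int.gcd_neg] using Complex.isPrimitiveRoot_exp_int_div N hN.ne' (-q)
  have hNK : N = K * Ntil := by
    rw [hNtil, hK, Nat.mul_div_cancel']; exact_mod_cast Int.gcd_dvd_left (a := N) (b := q)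
  have hNtil2 : Ntil = 2 * M := by rw [hM]; exact (Nat.two_mul_div_two_of_even hEven).symm
  obtain ⟨m, rfl⟩ : p ∣ M := hM ▸ hpd
  have hm : 0 < m := Nat.pos_of_ne_zero fun hm0 => by simp [hm0, hNtil2] at hNK; omega
  have hζ2 : IsPrimitiveRoot ζ (2 * (p * m)) := hNtil2 ▸ hζ
  calc _ = ∑ j ∈ range N, ((pad n j : ℤ) : ℂ) * ζ ^ j := by
        rw [← Fin.sum_univ_eq_sum_range]
        refine sum_congr rfl fun j _ => ?_
        rw [pad, dif_pos j.isLt, ← Complex.exp_nat_mul]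
        ring_nf
    _ = ∑ l ∈ range Ntil, (y l : ℂ) * ζ ^ l := by
        rw [show range N = range (K * Ntil) by rw [hNK],
          sum_range_mul_pow_of_pow_eq_one hζ.pow_eq_one]
        simp only [hy, Int.cast_sum]
    _ = ∑ l ∈ range (p * m), (z l : ℂ) * ζ ^ l := by
        rw [hNtil2, sum_range_two_mul_pow_of_pow_eq_neg_one
          (hζ2.pow_eq_neg_one (Nat.mul_pos hp.pos hm).ne')]
        simp only [hz, Int.cast_sub]
    _ = 0 := by
        rw [sum_range_mul_pow_of_antiperiodic,
          hζ2.geom_sum_neg_pow_eq_zero hp.one_lt hpodd hm, zero_mul]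
        intro a ha r hr
        rw [h (a * m + r) (by nlinarith), mul_add_mul_div_mul hr hp.pos,
          Nat.mul_div_cancel_left _ hp.pos, Nat.mul_add_mod_of_lt hr]
        norm_cast

theorem cyclic_case_three_solution (N : ℕ) (hN : 1 ≤ N) (q : ℤ)
    (K Ntil M : ℕ) (hK : K = Int.gcd (N : ℤ) q) (hNtil : Ntil = N / K)
    (hEven : Even Ntil) (hNotPow : ¬ ∃ m : ℕ, Ntil = 2 ^ m)
    (hM : M = Ntil / 2)
    (p : ℕ) (hp : p.Prime) (hpodd : Odd p) (hpd : p ∣ Ntil / 2)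
    (n : Fin N → ℤ)
    (y : ℕ → ℤ) (hy : ∀ l, y l = ∑ k ∈ Finset.range K, pad n (l + k * Ntil))
    (z : ℕ → ℤ) (hz : ∀ l, z l = y l - y (l + M))
    (h : ∀ j < M, z j = (-1 : ℤ) ^ (j * p / M) * z (j % (M / p))) :
    ∑ j : Fin N, (n j : ℂ) *
      Complex.exp (-(2 * (Real.pi : ℂ) * Complex.I * (q : ℂ) * ((j : ℕ) : ℂ)) / (N : ℂ)) = 0 :=
  cyclic_case_three_solution_general N q K Ntil M hK hNtil hEven hM p hp hpodd hpd n y hy z hz h
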